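/- arXiv:1507.04575 — 4 statements merged into one kernel-verified Lean document; each statement's English description precedes it below -/
import Mathlib

section
/- If λ is an H-eigenvalue of a real m-order n-dimensional tensor A (i.e., there exist a nonzero real vector x and real λ with (A x^{m-1})_i = λ x_i^{m-1} for all i), then there exists an index i with |λ - a_{i...i}| ≤ r_i(A), where r_i(A) is the sum of absolute values of all off-diagonal entries in the i-th row of A. -/
open Finset

section TensorDefs

variable {ι : Type*} [Fintype ι] [DecidableEq ι] {k : ℕ}

/-- diagonal entry `a_{i…i}` of an `(k+1)`-order tensor given by its row slices -/
def diagT (A : ι → (Fin k → ι) → ℝ) (i : ι) : ℝ := A i (fun _ => i)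

/-- the off-diagonal multi-indices of row `i` -/
def offT (k : ℕ) (i : ι) : Finset (Fin k → ι) :=
  Finset.univ.filter (fun t => t ≠ (fun _ => i))

/-- the multi-indices different from `(i,…,i)` and `(j,…,j)` -/
def offT2 (k : ℕ) (i j : ι) : Finset (Fin k → ι) :=
  Finset.univ.filter (fun t => t ≠ (fun _ => i) ∧ t ≠ (fun _ => j))

/-- `r_i(A)` -/
def rT (A : ι → (Fin k → ι) → ℝ) (i : ι) : ℝ := ∑ t ∈ offT k i, |A i t|

/-- `r_j^i(A)` -/
def rT2 (A : ι → (Fin k → ι) → ℝ) (j i : ι) : ℝ := ∑ t ∈ offT2 k i j, |A j t|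

/-- `β_i(A) = max{0, off-diagonal entries of row i}` -/
noncomputable def betaT (A : ι → (Fin k → ι) → ℝ) (i : ι) : ℝ :=
  (insert (0:ℝ) ((offT k i).image (A i))).max' (Finset.insert_nonempty _ _)

/-- `γ_i(A) = min{0, off-diagonal entries of row i}` -/
noncomputable def gammaT (A : ι → (Fin k → ι) → ℝ) (i : ι) : ℝ :=
  (insert (0:ℝ) ((offT k i).image (A i))).min' (Finset.insert_nonempty _ _)

/-- `Δ_i(A)` -/
noncomputable def deltaT (A : ι → (Fin k → ι) → ℝ) (i : ι) : ℝ :=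
  ∑ t ∈ offT k i, (betaT A i - A i t)

/-- `Θ_i(A)` -/
noncomputable def thetaT (A : ι → (Fin k → ι) → ℝ) (i : ι) : ℝ :=
  ∑ t ∈ offT k i, (A i t - gammaT A i)

/-- `Δ_j^i(A)` -/
noncomputable def deltaT2 (A : ι → (Fin k → ι) → ℝ) (j i : ι) : ℝ :=
  ∑ t ∈ offT2 k i j, (betaT A j - A j t)

/-- `Θ_j^i(A)` -/
noncomputable def thetaT2 (A : ι → (Fin k → ι) → ℝ) (j i : ι) : ℝ :=
  ∑ t ∈ offT2 k i j, (A j t - gammaT A j)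

/-- `Ā`: the `k`-th row tensor of `A` multiplied by `sign(a_{k…k})` -/
noncomputable def barT (A : ι → (Fin k → ι) → ℝ) : ι → (Fin k → ι) → ℝ :=
  fun i t => Real.sign (diagT A i) * A i t

/-- double `B`-tensor -/
def DoubleB (A : ι → (Fin k → ι) → ℝ) : Prop :=
  (∀ i, betaT A i < diagT A i) ∧
  (∀ i, deltaT A i ≤ diagT A i - betaT A i) ∧
  (∀ i j, i ≠ j → deltaT A i * deltaT A j <
    (diagT A i - betaT A i) * (diagT A j - betaT A j))

/-- quasi-double `B`-tensor -/
def QuasiDoubleB (A : ι → (Fin k → ι) → ℝ) : Prop :=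
  (∀ i, betaT A i < diagT A i) ∧
  ∀ i j, i ≠ j → (betaT A i - A j (fun _ => i)) * deltaT A j <
    (diagT A i - betaT A i) * (diagT A j - betaT A j - deltaT2 A j i)

/-- symmetric tensor of order `k+1` (row form) -/
def SymT (A : ι → (Fin k → ι) → ℝ) : Prop :=
  ∀ σ : Equiv.Perm (Fin (k+1)), ∀ t : Fin (k+1) → ι,
    A ((t ∘ σ) 0) (Fin.tail (t ∘ σ)) = A (t 0) (Fin.tail t)

end TensorDefs

/-! As for matrices: at a coordinate `i` where `|x i|` is maximal, the off-diagonal part of row `i`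
equals `(λ - a_{i…i}) x_i^k`, and each of its monomials has modulus at most `|x i|^k`. -/

theorem abs_prod_comp_le_pow {ι : Type*} {k : ℕ} {x : ι → ℝ} {M : ℝ} (hM : ∀ j, |x j| ≤ M)
    (t : Fin k → ι) :
    |∏ s, x (t s)| ≤ M ^ k := by
  rw [Finset.abs_prod]
  calc ∏ s, |x (t s)| ≤ ∏ _s : Fin k, M :=
        Finset.prod_le_prod (fun s _ => abs_nonneg _) fun s _ => hM (t s)
    _ = M ^ k := by simp

section Gerschgorin

variable {ι : Type*} [Fintype ι] [DecidableEq ι] {k : ℕ}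

/-- `(A x^k)_i` for a tensor of order `k + 1`. -/
def tensorApply (A : ι → (Fin k → ι) → ℝ) (x : ι → ℝ) (i : ι) : ℝ :=
  ∑ t : Fin k → ι, A i t * ∏ s, x (t s)

theorem tensorApply_eq_diagT_add_sum_offT (A : ι → (Fin k → ι) → ℝ) (x : ι → ℝ) (i : ι) :
    tensorApply A x i = diagT A i * x i ^ k + ∑ t ∈ offT k i, A i t * ∏ s, x (t s) := by
  rw [tensorApply, ← Finset.add_sum_erase _ _ (mem_univ fun _ => i), offT,
    Finset.filter_ne' univ]
  simp [diagT]

theorem abs_sub_diagT_le_rT_of_abs_le {A : ι → (Fin k → ι) → ℝ} {lam : ℝ} {x : ι → ℝ}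
    (heig : ∀ i, tensorApply A x i = lam * x i ^ k) {i : ι} (hxi : x i ≠ 0)
    (hmax : ∀ j, |x j| ≤ |x i|) :
    |lam - diagT A i| ≤ rT A i := by
  have hoff : (lam - diagT A i) * x i ^ k = ∑ t ∈ offT k i, A i t * ∏ s, x (t s) := by
    linarith [heig i, tensorApply_eq_diagT_add_sum_offT A x i]
  have hbound : |lam - diagT A i| * |x i| ^ k ≤ rT A i * |x i| ^ k :=
    calc |lam - diagT A i| * |x i| ^ k = |∑ t ∈ offT k i, A i t * ∏ s, x (t s)| := by
          rw [← hoff, abs_mul, abs_pow]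
      _ ≤ ∑ t ∈ offT k i, |A i t| * |x i| ^ k := by
          refine (Finset.abs_sum_le_sum_abs _ _).trans (Finset.sum_le_sum fun t _ => ?_)
          rw [abs_mul]
          exact mul_le_mul_of_nonneg_left (abs_prod_comp_le_pow hmax t) (abs_nonneg _)
      _ = rT A i * |x i| ^ k := by rw [rT, Finset.sum_mul]
  exact le_of_mul_le_mul_right hbound (pow_pos (abs_pos.mpr hxi) k)

end Gerschgorin

/-- Gerschgorin-type bound for H-eigenvalues (order `k+1`). -/
theorem stmt0 {n k : ℕ} (A : Fin n → (Fin k → Fin n) → ℝ) (lam : ℝ) (x : Fin n → ℝ)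
    (hx : x ≠ 0)
    (heig : ∀ i, (∑ t : Fin k → Fin n, A i t * ∏ s, x (t s)) = lam * x i ^ k) :
    ∃ i, |lam - diagT A i| ≤ rT A i := by
  obtain ⟨j, hj⟩ := Function.ne_iff.mp hx
  obtain ⟨i, -, hmax⟩ := Finset.exists_max_image univ (fun j => |x j|) ⟨j, mem_univ j⟩
  have hxi : x i ≠ 0 := abs_pos.mp ((abs_pos.mpr hj).trans_le (hmax j (mem_univ j)))
  exact ⟨i, abs_sub_diagT_le_rT_of_abs_le heig hxi fun j => hmax j (mem_univ j)⟩
end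

section
/- Let A be a real m-order n-dimensional symmetric tensor with m even, positive diagonal entries a_{i...i} > 0 for all i, and suppose A is doubly strictly diagonally dominant: |a_{i...i}||a_{j...j}| > r_i(A) r_j(A) for all i ≠ j, and (when m > 2) |a_{i...i}| ≥ r_i(A) for all i. Then A is positive definite, i.e., A x^m > 0 for all nonzero x ∈ ℝ^n. -/
open Finset

open Filter Topology

/-! Write `|x| = w * z` for a positive weight `w`. AM–GM on every monomial, followed by the symmetry
of `A` (which moves any coordinate of a multi-index to position `0`), bounds the off-diagonal part of
`A |x|^m` by `∑ᵢ r_i^w z_i^m`, where `r_i^w` is the row sum `r_i` with each entry `a_T` weighted by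
`∏ₛ w_{T s}`. So `A x^m > 0` as soon as `r_i^w < a_{i…i} w_i^m` for every `i`.

If `A` is strictly diagonally dominant, `w = 1` works. Otherwise double dominance leaves a single row
`p` with `r_p ≥ a_{p…p}`, and `w = c` at `p`, `1` elsewhere works for `c` slightly above
`c₀ = r_p / a_{p…p}`: for `i ≠ p` one needs `r_i c₀^(m-1) < a_{i…i}`, which for `m = 2` is
`r_i r_p < a_{i…i} a_{p…p}`, and for `m > 2` follows from it because then `c₀ = 1`. -/

lemma prod_le_sum_pow_div {m : ℕ} (hm : 0 < m) (y : Fin m → ℝ) (hy : ∀ s, 0 ≤ y s) :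
    ∏ s, y s ≤ (∑ s, y s ^ m) / m := by
  have hm' : (m : ℝ) ≠ 0 := by exact_mod_cast hm.ne'
  have h := Real.geom_mean_le_arith_mean_weighted univ (fun _ => (m : ℝ)⁻¹)
    (fun s => y s ^ m) (fun _ _ => by positivity) (by simp [hm'])
    (fun s _ => pow_nonneg (hy s) m)
  have hroot : ∀ s, (y s ^ m) ^ (m : ℝ)⁻¹ = y s := fun s => by
    rw [← Real.rpow_natCast, ← Real.rpow_mul (hy s), mul_inv_cancel₀ hm', Real.rpow_one]
  rw [sum_div]
  simpa only [hroot, ← mul_sum, inv_mul_eq_div] using h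

lemma sum_pi_fin_succ {ι : Type*} [Fintype ι] {k : ℕ} (f : (Fin (k+1) → ι) → ℝ) :
    ∑ T, f T = ∑ i, ∑ t : Fin k → ι, f (Fin.cons i t) := by
  rw [← Fintype.sum_prod_type']
  exact (Fintype.sum_equiv (Fin.consEquiv fun _ => ι) _ _ fun _ => rfl).symm

lemma sum_mul_prod_le_sum_mul_pow {ι : Type*} [Fintype ι] {k : ℕ}
    (o : (Fin (k+1) → ι) → ℝ) (ho : ∀ T, 0 ≤ o T)
    (hsym : ∀ (σ : Equiv.Perm (Fin (k+1))) T, o (T ∘ σ) = o T)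
    (z : ι → ℝ) (hz : ∀ i, 0 ≤ z i) :
    ∑ T, o T * ∏ s, z (T s) ≤ ∑ T, o T * z (T 0) ^ (k+1) := by
  have hmove : ∀ s, ∑ T, o T * z (T s) ^ (k+1) = ∑ T, o T * z (T 0) ^ (k+1) := fun s =>
    Fintype.sum_equiv ((Equiv.swap 0 s).arrowCongr (Equiv.refl ι)) _ _ fun T => by
      change _ = o (T ∘ Equiv.swap 0 s) * z (T (Equiv.swap 0 s 0)) ^ (k+1)
      rw [hsym, Equiv.swap_apply_left]
  calc ∑ T, o T * ∏ s, z (T s)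
      ≤ ∑ T, o T * ((∑ s, z (T s) ^ (k+1)) / (k+1 : ℕ)) :=
        sum_le_sum fun T _ => mul_le_mul_of_nonneg_left
          (prod_le_sum_pow_div k.succ_pos _ fun s => hz _) (ho T)
    _ = (∑ s, ∑ T, o T * z (T s) ^ (k+1)) / (k+1 : ℕ) := by
        simp only [mul_div_assoc', mul_sum, ← sum_div]
        rw [sum_comm]
    _ = ∑ T, o T * z (T 0) ^ (k+1) := by
        simp only [hmove, sum_const, card_univ, Fintype.card_fin, nsmul_eq_mul]
        field_simp

lemma exists_gt_forall_mul_pow_lt {ι : Type*} (s : Finset ι) (r d : ι → ℝ) (k : ℕ) {c₀ : ℝ}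
    (h : ∀ i ∈ s, r i * c₀ ^ k < d i) : ∃ c, c₀ < c ∧ ∀ i ∈ s, r i * c ^ k < d i := by
  have hnear : ∀ i ∈ s, ∀ᶠ c in 𝓝[>] c₀, r i * c ^ k < d i := fun i hi =>
    (((continuous_const.mul (continuous_pow k)).tendsto c₀).mono_left
      nhdsWithin_le_nhds).eventually_lt_const (h i hi)
  exact (eventually_mem_nhdsWithin.and ((eventually_all_finset s).2 hnear)).exists

lemma prod_le_pow_of_le_one {k : ℕ} {f : Fin (k+1) → ℝ} {c : ℝ} (hf : ∀ s, 0 ≤ f s)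
    (hfc : ∀ s, f s ≤ c) {s₀ : Fin (k+1)} (hs₀ : f s₀ ≤ 1) : ∏ s, f s ≤ c ^ k := by
  rw [← mul_prod_erase univ f (mem_univ s₀)]
  calc f s₀ * ∏ s ∈ univ.erase s₀, f s ≤ 1 * ∏ _s ∈ univ.erase s₀, c :=
        mul_le_mul hs₀ (prod_le_prod (fun s _ => hf s) fun s _ => hfc s)
          (prod_nonneg fun s _ => hf s) zero_le_one
    _ = c ^ k := by simp [card_erase_of_mem]

section WeightedDominance

variable {ι : Type*} [Fintype ι] [DecidableEq ι] {k : ℕ}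

def tensorForm (A : ι → (Fin k → ι) → ℝ) (x : ι → ℝ) : ℝ :=
  ∑ T : Fin (k+1) → ι, A (T 0) (Fin.tail T) * ∏ s, x (T s)

def rTWeighted (A : ι → (Fin k → ι) → ℝ) (w : ι → ℝ) (i : ι) : ℝ :=
  ∑ t ∈ offT k i, |A i t| * ∏ s, w ((Fin.cons i t : Fin (k+1) → ι) s)

lemma rTWeighted_one (A : ι → (Fin k → ι) → ℝ) : rTWeighted A 1 = rT A := by
  ext i
  simp [rTWeighted, rT]

lemma rT_nonneg (A : ι → (Fin k → ι) → ℝ) (i : ι) : 0 ≤ rT A i :=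
  sum_nonneg fun _ _ => abs_nonneg _

lemma sum_eq_sum_diag_add_sum_offT (f : (Fin (k+1) → ι) → ℝ) :
    ∑ T, f T = ∑ i, f (fun _ => i) + ∑ i, ∑ t ∈ offT k i, f (Fin.cons i t) := by
  rw [sum_pi_fin_succ, ← sum_add_distrib]
  refine sum_congr rfl fun i _ => ?_
  rw [offT, filter_ne', ← add_sum_erase _ _ (mem_univ fun _ : Fin k => i)]
  exact congrArg (· + _) (congrArg f (Fin.cons_self_tail fun _ : Fin (k+1) => i))

lemma sub_sum_rTWeighted_abs_le_tensorForm (A : ι → (Fin k → ι) → ℝ) (x : ι → ℝ) :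
    ∑ i, diagT A i * x i ^ (k+1) - ∑ i, rTWeighted A (fun j => |x j|) i ≤ tensorForm A x := by
  rw [tensorForm, sum_eq_sum_diag_add_sum_offT, sub_eq_add_neg, ← sum_neg_distrib]
  simp only [prod_const, card_univ, Fintype.card_fin, rTWeighted, ← sum_neg_distrib,
    Fin.cons_zero, Fin.tail_cons]
  refine add_le_add le_rfl (sum_le_sum fun i _ => sum_le_sum fun t _ => ?_)
  simpa only [abs_mul, abs_prod] using
    neg_abs_le (A i t * ∏ s, x ((Fin.cons i t : Fin (k+1) → ι) s))

lemma sum_rTWeighted_mul_le (A : ι → (Fin k → ι) → ℝ) (hsym : SymT A)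
    (w z : ι → ℝ) (hw : ∀ i, 0 ≤ w i) (hz : ∀ i, 0 ≤ z i) :
    ∑ i, rTWeighted A (fun j => w j * z j) i ≤ ∑ i, rTWeighted A w i * z i ^ (k+1) := by
  have key := sum_mul_prod_le_sum_mul_pow (fun T => |A (T 0) (Fin.tail T)| * ∏ s, w (T s))
    (fun T => mul_nonneg (abs_nonneg _) (prod_nonneg fun s _ => hw _))
    (fun σ T => by
      rw [hsym σ T, Function.comp_def, Equiv.prod_comp σ fun s => w (T s)]) z hz
  rw [sum_eq_sum_diag_add_sum_offT, sum_eq_sum_diag_add_sum_offT] at key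
  simp only [Fin.cons_zero, Fin.tail_cons, prod_const, card_univ, Fintype.card_fin] at key
  simpa only [rTWeighted, sum_mul, prod_mul_distrib, mul_assoc] using le_of_add_le_add_left key

theorem tensorForm_pos_of_rTWeighted_lt (A : ι → (Fin k → ι) → ℝ) (hsym : SymT A)
    (hev : Even (k+1)) (w : ι → ℝ) (hw : ∀ i, 0 < w i)
    (hdom : ∀ i, rTWeighted A w i < diagT A i * w i ^ (k+1)) {x : ι → ℝ} (hx : x ≠ 0) :
    0 < tensorForm A x := by
  obtain ⟨q, hq⟩ := Function.ne_iff.mp hx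
  set z : ι → ℝ := fun i => |x i| / w i
  have hz : ∀ i, 0 ≤ z i := fun i => div_nonneg (abs_nonneg _) (hw i).le
  have hxz : (fun j => |x j|) = fun j => w j * z j :=
    funext fun j => (mul_div_cancel₀ _ (hw j).ne').symm
  have hpow : ∀ i, x i ^ (k+1) = w i ^ (k+1) * z i ^ (k+1) := fun i => by
    rw [← hev.pow_abs, ← mul_pow, congrFun hxz i]
  have hoff := sum_rTWeighted_mul_le A hsym w z (fun i => (hw i).le) hz
  rw [← hxz] at hoff
  have hdiag : ∑ i, rTWeighted A w i * z i ^ (k+1) < ∑ i, diagT A i * x i ^ (k+1) := by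
    simp only [hpow, ← mul_assoc]
    refine sum_lt_sum (fun i _ => ?_) ⟨q, mem_univ q, ?_⟩
    · exact mul_le_mul_of_nonneg_right (hdom i).le (pow_nonneg (hz i) _)
    · exact mul_lt_mul_of_pos_right (hdom q) (pow_pos (div_pos (abs_pos.2 hq) (hw q)) _)
  linarith [sub_sum_rTWeighted_abs_le_tensorForm A x]

lemma rTWeighted_ite_le (A : ι → (Fin k → ι) → ℝ) (p : ι) {c : ℝ} (hc : 1 ≤ c) (i : ι) :
    rTWeighted A (fun j => if j = p then c else 1) i ≤ c ^ k * rT A i := by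
  rw [rT, mul_sum]
  refine sum_le_sum fun t ht => ?_
  rw [mul_comm (c ^ k)]
  refine mul_le_mul_of_nonneg_left ?_ (abs_nonneg _)
  have hne : ∃ s, (Fin.cons i t : Fin (k+1) → ι) s ≠ p := by
    by_cases hip : i = p
    · subst hip
      obtain ⟨s, hs⟩ := Function.ne_iff.mp (mem_filter.mp ht).2
      exact ⟨s.succ, by simpa using hs⟩
    · exact ⟨0, by simpa using hip⟩
  obtain ⟨s₀, hs₀⟩ := hne
  exact prod_le_pow_of_le_one (s₀ := s₀) (fun s => by dsimp only; split_ifs <;> linarith)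
    (fun s => by dsimp only; split_ifs <;> linarith) (by simp [hs₀])

theorem exists_rTWeighted_lt (A : ι → (Fin k → ι) → ℝ) (hdiag : ∀ i, 0 < diagT A i)
    (h1 : ∀ i j, i ≠ j → rT A i * rT A j < diagT A i * diagT A j)
    (h2 : 2 < k + 1 → ∀ i, rT A i ≤ diagT A i) :
    ∃ w : ι → ℝ, (∀ i, 0 < w i) ∧ ∀ i, rTWeighted A w i < diagT A i * w i ^ (k+1) := by
  by_cases hsdd : ∀ i, rT A i < diagT A i
  · exact ⟨1, fun _ => one_pos, by simpa [rTWeighted_one] using hsdd⟩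
  simp only [not_forall, not_lt] at hsdd
  obtain ⟨p, hp⟩ := hsdd
  have hdp := hdiag p
  set c₀ := rT A p / diagT A p
  have hc₀ : 1 ≤ c₀ := (one_le_div hdp).2 hp
  have hc₀k : c₀ ^ k ≤ c₀ := by
    rcases le_or_gt k 1 with hk | hk
    · exact (pow_le_pow_right₀ hc₀ hk).trans_eq (pow_one c₀)
    · have : c₀ = 1 := le_antisymm ((div_le_one hdp).2 (h2 (by omega) p)) hc₀
      simp [this]
  have hother : ∀ i ∈ univ.erase p, rT A i * c₀ ^ k < diagT A i := fun i hi =>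
    calc rT A i * c₀ ^ k ≤ rT A i * c₀ := mul_le_mul_of_nonneg_left hc₀k (rT_nonneg A i)
      _ < diagT A i := by
        rw [← mul_div_assoc, div_lt_iff₀ hdp]
        exact h1 i p (ne_of_mem_erase hi)
  obtain ⟨c, hc₀c, hc⟩ := exists_gt_forall_mul_pow_lt _ _ _ k hother
  have hc1 : 1 ≤ c := hc₀.trans hc₀c.le
  refine ⟨fun j => if j = p then c else 1, fun j => by dsimp only; split_ifs <;> linarith,
    fun i => (rTWeighted_ite_le A p hc1 i).trans_lt ?_⟩
  by_cases hip : i = p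
  · subst hip
    have hrc : rT A i < c * diagT A i := (div_lt_iff₀ hdp).1 hc₀c
    simp only [↓reduceIte, pow_succ]
    nlinarith [pow_pos (by linarith : 0 < c) k]
  · simpa [hip, mul_comm (c ^ k)] using hc i (mem_erase.2 ⟨hip, mem_univ i⟩)

end WeightedDominance

/-- An even-order symmetric DSDD tensor with positive diagonal is positive definite. -/
theorem stmt3 {n k : ℕ} (A : Fin n → (Fin k → Fin n) → ℝ)
    (hev : Even (k + 1)) (hsym : SymT A)
    (hdiag : ∀ i, 0 < diagT A i)
    (hdsdd1 : ∀ i j, i ≠ j → rT A i * rT A j < |diagT A i| * |diagT A j|)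
    (hdsdd2 : 2 < k + 1 → ∀ i, rT A i ≤ |diagT A i|)
    (x : Fin n → ℝ) (hx : x ≠ 0) :
    0 < ∑ t : Fin (k+1) → Fin n, A (t 0) (Fin.tail t) * ∏ s, x (t s) := by
  simp only [abs_of_pos (hdiag _)] at hdsdd1 hdsdd2
  obtain ⟨w, hw, hdom⟩ := exists_rTWeighted_lt A hdiag hdsdd1 hdsdd2
  exact tensorForm_pos_of_rTWeighted_lt A hsym hev w hw hdom hx
end

section
/- If A is a quasi-doubly strictly diagonally dominant tensor (|a_{i...i}|(|a_{j...j}| − r_j^i(A)) > r_i(A)|a_{j i...i}| for all i ≠ j) with n ≥ 2, then there exists an index i with |a_{i...i}| > r_i(A). -/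
/-! If no row were strictly diagonally dominant, then for any `i ≠ j` we would have
`|a_{j…j}| - r_j^i(A) ≤ r_j(A) - r_j^i(A) ≤ |a_{ji…i}|` and `|a_{i…i}| ≤ r_i(A)`; multiplying
these contradicts the quasi-double dominance condition for the pair `(i, j)`. -/

open Finset

section TensorRows

variable {ι : Type*} [Fintype ι] [DecidableEq ι] {k : ℕ}

theorem offT_subset_insert_offT2 (i j : ι) :
    offT k j ⊆ insert (fun _ => i) (offT2 k i j) := by
  intro t ht
  simp only [offT, offT2, mem_insert, mem_filter, mem_univ, true_and] at ht ⊢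
  tauto

theorem rT_le_rT2_add_abs (A : ι → (Fin k → ι) → ℝ) (i j : ι) :
    rT A j ≤ rT2 A j i + |A j (fun _ => i)| := by
  have hnot : (fun _ : Fin k => i) ∉ offT2 k i j := by simp [offT2]
  calc rT A j
      ≤ ∑ t ∈ insert (fun _ => i) (offT2 k i j), |A j t| :=
        sum_le_sum_of_subset_of_nonneg (offT_subset_insert_offT2 i j)
          fun _ _ _ => abs_nonneg _
    _ = rT2 A j i + |A j (fun _ => i)| := by
        rw [sum_insert hnot, add_comm, rT2]

end TensorRows

/-- A Q-DSDD tensor has a strictly diagonally dominant row. -/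
theorem stmt5 {n k : ℕ} (hn : 2 ≤ n) (A : Fin n → (Fin k → Fin n) → ℝ)
    (hqdsdd : ∀ i j, i ≠ j → rT A i * |A j (fun _ => i)| <
      |diagT A i| * (|diagT A j| - rT2 A j i)) :
    ∃ i, rT A i < |diagT A i| := by
  by_contra! hdom
  obtain ⟨i, j, hij⟩ : ∃ i j : Fin n, i ≠ j :=
    ⟨⟨0, by omega⟩, ⟨1, by omega⟩, by simp [Fin.ext_iff]⟩
  have hj : |diagT A j| - rT2 A j i ≤ |A j (fun _ => i)| := by
    linarith [hdom j, rT_le_rT2_add_abs A i j]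
  have : rT A i * |A j (fun _ => i)| < rT A i * |A j (fun _ => i)| :=
    calc rT A i * |A j (fun _ => i)|
        < |diagT A i| * (|diagT A j| - rT2 A j i) := hqdsdd i j hij
      _ ≤ |diagT A i| * |A j (fun _ => i)| := mul_le_mul_of_nonneg_left hj (abs_nonneg _)
      _ ≤ rT A i * |A j (fun _ => i)| := mul_le_mul_of_nonneg_right (hdom i) (abs_nonneg _)
  exact lt_irrefl _ this
end

section
/- If A is a double B̄-tensor (i.e., Ā is a double B-tensor), then every principal subtensor A[α], for any nonempty subset α of indices, is a double B̄-tensor. -/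
/-!
Passing to the subtensor `A[α]` only deletes off-diagonal entries of each row and keeps the
diagonal, and it commutes with the row sign changes `A ↦ Ā`. Deleting entries can only lower
`β_i` (a maximum over fewer numbers, still including `0`) and `Δ_i` (a sum of fewer nonnegative
terms, each of which shrinks with `β_i`), so all three defining inequalities survive.
-/

open Finset

section Reindex

variable {ι κ : Type*} {k : ℕ}

def reindexT (f : κ → ι) (B : ι → (Fin k → ι) → ℝ) : κ → (Fin k → κ) → ℝ :=
  fun i t => B (f i) (f ∘ t)

lemma barT_reindexT (f : κ → ι) (B : ι → (Fin k → ι) → ℝ) :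
    barT (reindexT f B) = reindexT f (barT B) := rfl

variable [Fintype ι] [DecidableEq ι] [Fintype κ] [DecidableEq κ]

lemma betaT_nonneg (B : ι → (Fin k → ι) → ℝ) (i : ι) : 0 ≤ betaT B i :=
  le_max' _ _ (mem_insert_self _ _)

lemma le_betaT (B : ι → (Fin k → ι) → ℝ) {i : ι} {t : Fin k → ι} (ht : t ∈ offT k i) :
    B i t ≤ betaT B i :=
  le_max' _ _ (mem_insert_of_mem (mem_image_of_mem _ ht))

lemma deltaT_nonneg (B : ι → (Fin k → ι) → ℝ) (i : ι) : 0 ≤ deltaT B i :=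
  sum_nonneg fun _ ht => sub_nonneg.2 (le_betaT B ht)

lemma comp_mem_offT {f : κ → ι} (hf : Function.Injective f) {i : κ} {t : Fin k → κ}
    (ht : t ∈ offT k i) : f ∘ t ∈ offT k (f i) := by
  simp only [offT, mem_filter, mem_univ, true_and] at ht ⊢
  exact fun h => ht (funext fun s => hf (congrFun h s))

lemma betaT_reindexT_le {f : κ → ι} (hf : Function.Injective f) (B : ι → (Fin k → ι) → ℝ)
    (i : κ) : betaT (reindexT f B) i ≤ betaT B (f i) := by
  refine max'_le _ _ _ fun y hy => ?_
  rcases mem_insert.1 hy with rfl | hy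
  · exact betaT_nonneg B (f i)
  · obtain ⟨t, ht, rfl⟩ := mem_image.1 hy
    exact le_betaT B (comp_mem_offT hf ht)

lemma deltaT_reindexT_le {f : κ → ι} (hf : Function.Injective f) (B : ι → (Fin k → ι) → ℝ)
    (i : κ) : deltaT (reindexT f B) i ≤ deltaT B (f i) :=
  calc deltaT (reindexT f B) i
      ≤ ∑ t ∈ offT k i, (betaT B (f i) - B (f i) (f ∘ t)) :=
        sum_le_sum fun _ _ => sub_le_sub_right (betaT_reindexT_le hf B i) _
    _ = ∑ u ∈ (offT k i).image (f ∘ ·), (betaT B (f i) - B (f i) u) := by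
        rw [sum_image (hf.comp_left (α := Fin k)).injOn]
    _ ≤ deltaT B (f i) := by
        refine sum_le_sum_of_subset_of_nonneg ?_ fun u hu _ => sub_nonneg.2 (le_betaT B hu)
        intro u hu
        obtain ⟨t, ht, rfl⟩ := mem_image.1 hu
        exact comp_mem_offT hf ht

lemma DoubleB.reindex {B : ι → (Fin k → ι) → ℝ} (h : DoubleB B) {f : κ → ι}
    (hf : Function.Injective f) : DoubleB (reindexT f B) := by
  obtain ⟨hdiag, hrow, hpair⟩ := h
  have hβ := betaT_reindexT_le hf B
  have hΔ := deltaT_reindexT_le hf B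
  have hgap (i : κ) : diagT B (f i) - betaT B (f i) ≤
      diagT (reindexT f B) i - betaT (reindexT f B) i :=
    sub_le_sub_left (hβ i) _
  refine ⟨fun i => (hβ i).trans_lt (hdiag (f i)), fun i => ?_, fun i j hij => ?_⟩
  · exact (hΔ i).trans ((hrow (f i)).trans (hgap i))
  · calc deltaT (reindexT f B) i * deltaT (reindexT f B) j
        ≤ deltaT B (f i) * deltaT B (f j) :=
          mul_le_mul (hΔ i) (hΔ j) (deltaT_nonneg _ j) (deltaT_nonneg _ (f i))
      _ < (diagT B (f i) - betaT B (f i)) * (diagT B (f j) - betaT B (f j)) :=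
          hpair _ _ (hf.ne hij)
      _ ≤ _ := mul_le_mul (hgap i) (hgap j) (sub_nonneg.2 (hdiag (f j)).le)
          ((sub_nonneg.2 (hdiag (f i)).le).trans (hgap i))

end Reindex

theorem stmt9_general {n k : ℕ} (A : Fin n → (Fin k → Fin n) → ℝ) (h : DoubleB (barT A))
    (α : Finset (Fin n)) :
    DoubleB (barT (fun (i : {x // x ∈ α}) (t : Fin k → {x // x ∈ α}) =>
      A i.val (fun s => (t s).val))) := by
  change DoubleB (barT (reindexT Subtype.val A))
  rw [barT_reindexT]
  exact h.reindex Subtype.val_injective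

/-- Principal subtensors of double `B̄`-tensors are double `B̄`-tensors. -/
theorem stmt9 {n k : ℕ} (A : Fin n → (Fin k → Fin n) → ℝ) (h : DoubleB (barT A))
    (α : Finset (Fin n)) (hα : α.Nonempty) :
    DoubleB (barT (fun (i : {x // x ∈ α}) (t : Fin k → {x // x ∈ α}) =>
      A i.val (fun s => (t s).val))) :=
  stmt9_general A h α
end
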